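/- For every pseudo-Boolean function f: {0,1}^n → ℝ and every S ⊆ N, Φ_B(f,S) = f_S(S) − f_S(∅), where f_S is the orthogonal projection of f onto V_S = span{u_T : T ⊆ S} with respect to the inner product ⟨f,g⟩ = 2^{-n} Σ_{x∈{0,1}^n} f(x)g(x). -/

import Mathlib

open Finset

/-- The Banzhaf influence index `Φ_B(f,S) = 2^{-(n-|S|)} Σ_{T⊆N∖S} (f(T∪S) − f(T))`. -/
noncomputable def banzhafInfluence {n : ℕ} (f : Finset (Fin n) → ℝ) (S : Finset (Fin n)) : ℝ :=
  (1 / 2 ^ (n - S.card)) * ∑ T ∈ (univ \ S).powerset, (f (T ∪ S) - f T)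

/-- The unanimity function `u_T(x) = Π_{i∈T} x_i` on `{0,1}^n`. -/
def unanimity {n : ℕ} (T X : Finset (Fin n)) : ℝ :=
  ∏ i ∈ T, (if i ∈ X then (1 : ℝ) else 0)

/-!
Let `g` be the average of `f` over the fibres `{Y | Y ∩ S = X ∩ S}`. It depends only on the
coordinates in `S`, so by Möbius inversion it is a combination of the `u_T` with `T ⊆ S`, while
`f - g` is orthogonal to every function of those coordinates. By Pythagoras `g` is then the unique
least-squares approximation `f_S`, and `Φ_B(f,S) = g(S) - g(∅)` holds by unfolding both sides.
-/

section

variable {α : Type*} [DecidableEq α]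

theorem union_inter_eq_left_of_disjoint {B C S : Finset α}
    (hB : B ⊆ S) (hC : Disjoint C S) : (B ∪ C) ∩ S = B := by
  rw [union_inter_distrib_right, inter_eq_left.mpr hB, disjoint_iff_inter_eq_empty.mp hC,
    union_empty]

theorem union_sdiff_eq_right_of_disjoint {B C S : Finset α}
    (hB : B ⊆ S) (hC : Disjoint C S) : (B ∪ C) \ S = C := by
  rw [union_sdiff_distrib, sdiff_eq_empty_iff_subset.mpr hB, hC.sdiff_eq_left, empty_union]

variable [Fintype α]

theorem subset_univ_sdiff_iff {C S : Finset α} : C ⊆ univ \ S ↔ Disjoint C S := by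
  rw [← compl_eq_univ_sdiff, subset_compl_iff_disjoint_right]

theorem sum_eq_sum_powerset_sum_powerset_compl {M : Type*} [AddCommMonoid M] (S : Finset α)
    (F : Finset α → M) :
    ∑ X, F X = ∑ B ∈ S.powerset, ∑ C ∈ (univ \ S).powerset, F (B ∪ C) := by
  rw [← sum_product']
  refine sum_nbij' (fun X => (X ∩ S, X \ S)) (fun p => p.1 ∪ p.2) ?_ (by simp) ?_ ?_ ?_
  · intro X _
    simp only [mem_product, mem_powerset, subset_univ_sdiff_iff]
    exact ⟨inter_subset_right, sdiff_disjoint⟩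
  · intro X _
    exact sup_inf_sdiff X S
  · rintro ⟨B, C⟩ hBC
    rw [mem_product, mem_powerset, mem_powerset, subset_univ_sdiff_iff] at hBC
    simp [union_inter_eq_left_of_disjoint hBC.1 hBC.2, union_sdiff_eq_right_of_disjoint hBC.1 hBC.2]
  · intro X _
    exact congrArg F (sup_inf_sdiff X S).symm

theorem exists_sum_powerset_eq {𝕜 : Type*} [Field 𝕜] (h : Finset α → 𝕜) :
    ∃ d : Finset α → 𝕜, ∀ Y, ∑ T ∈ Y.powerset, d T = h Y := by
  let zetaSum : (Finset α → 𝕜) →ₗ[𝕜] Finset α → 𝕜 :=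
    LinearMap.pi fun Y => ∑ T ∈ Y.powerset, LinearMap.proj T
  have hzeta (d : Finset α → 𝕜) (Y : Finset α) : zetaSum d Y = ∑ T ∈ Y.powerset, d T := by
    simp [zetaSum]
  -- Möbius inversion makes the zeta transform injective, hence surjective in finite dimension.
  have hinj : Function.Injective zetaSum := by
    rw [← LinearMap.ker_eq_bot, LinearMap.ker_eq_bot']
    intro d hd
    funext X
    rw [IncidenceAlgebra.moebius_inversion_bot d (zetaSum d) (by simp [hzeta, Iic_eq_powerset]), hd]
    simp
  obtain ⟨d, hd⟩ := LinearMap.injective_iff_surjective.mp hinj h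
  exact ⟨d, fun Y => by rw [← hzeta, hd]⟩

end

theorem eq_of_sum_sq_sub_le_of_sum_mul_eq_zero {ι : Type*} [Fintype ι] {f g p : ι → ℝ}
    (horth : ∑ x, (f x - g x) * (g x - p x) = 0)
    (hle : ∑ x, (f x - p x) ^ 2 ≤ ∑ x, (f x - g x) ^ 2) : p = g := by
  have hpyth : ∑ x, (f x - p x) ^ 2 = ∑ x, (f x - g x) ^ 2 + ∑ x, (g x - p x) ^ 2 := by
    have hsq (x : ι) : (f x - p x) ^ 2
        = (f x - g x) ^ 2 + 2 * ((f x - g x) * (g x - p x)) + (g x - p x) ^ 2 := by ring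
    simp only [hsq, sum_add_distrib, ← mul_sum, horth, mul_zero, add_zero]
  have hzero : ∑ x, (g x - p x) ^ 2 = 0 :=
    le_antisymm (by linarith) (sum_nonneg fun x _ => sq_nonneg _)
  funext x
  have := congrFun ((Fintype.sum_eq_zero_iff_of_nonneg fun x => sq_nonneg (g x - p x)).mp hzero) x
  simp only [Pi.zero_apply, pow_eq_zero_iff two_ne_zero, sub_eq_zero] at this
  exact this.symm

/-- The conditional expectation of `f` given the coordinates in `S`. -/
noncomputable def fiberMean {α : Type*} [Fintype α] [DecidableEq α] (f : Finset α → ℝ)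
    (S X : Finset α) : ℝ :=
  (1 / 2 ^ (Fintype.card α - S.card)) * ∑ A ∈ (univ \ S).powerset, f (X ∩ S ∪ A)

section fiberMean

variable {α : Type*} [Fintype α] [DecidableEq α] (f : Finset α → ℝ) (S : Finset α)

theorem fiberMean_union_of_disjoint {B C : Finset α} (hB : B ⊆ S) (hC : Disjoint C S) :
    fiberMean f S (B ∪ C) = fiberMean f S B := by
  rw [fiberMean, fiberMean, union_inter_eq_left_of_disjoint hB hC, inter_eq_left.mpr hB]

theorem sum_fiberMean_union {B : Finset α} (hB : B ⊆ S) :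
    ∑ C ∈ (univ \ S).powerset, fiberMean f S (B ∪ C) = ∑ C ∈ (univ \ S).powerset, f (B ∪ C) := by
  have hcard : ((univ \ S).powerset.card : ℝ) = 2 ^ (Fintype.card α - S.card) := by
    rw [card_powerset, card_univ_sdiff]
    push_cast
    rfl
  rw [sum_congr rfl fun C hC => fiberMean_union_of_disjoint f S hB
    (subset_univ_sdiff_iff.mp (mem_powerset.mp hC)), sum_const, nsmul_eq_mul, hcard, fiberMean,
    inter_eq_left.mpr hB, ← mul_assoc, mul_one_div_cancel (by positivity), one_mul]

theorem sum_sub_fiberMean_mul_eq_zero {φ : Finset α → ℝ} (hφ : ∀ X, φ (X ∩ S) = φ X) :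
    ∑ X, (f X - fiberMean f S X) * φ X = 0 := by
  rw [sum_eq_sum_powerset_sum_powerset_compl S]
  refine sum_eq_zero fun B hB => ?_
  have hB : B ⊆ S := mem_powerset.mp hB
  calc ∑ C ∈ (univ \ S).powerset, (f (B ∪ C) - fiberMean f S (B ∪ C)) * φ (B ∪ C)
      = (∑ C ∈ (univ \ S).powerset, (f (B ∪ C) - fiberMean f S (B ∪ C))) * φ B := by
        rw [sum_mul]
        refine sum_congr rfl fun C hC => ?_
        have hC : Disjoint C S := subset_univ_sdiff_iff.mp (mem_powerset.mp hC)
        rw [← hφ, union_inter_eq_left_of_disjoint hB hC]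
    _ = 0 := by rw [sum_sub_distrib, sum_fiberMean_union f S hB, sub_self, zero_mul]

end fiberMean

theorem unanimity_eq_ite {n : ℕ} (T X : Finset (Fin n)) :
    unanimity T X = if T ⊆ X then 1 else 0 := by
  simp only [unanimity, prod_boole]
  rfl

theorem sum_mul_unanimity {n : ℕ} (S X : Finset (Fin n)) (d : Finset (Fin n) → ℝ) :
    ∑ T ∈ S.powerset, d T * unanimity T X = ∑ T ∈ (X ∩ S).powerset, d T := by
  simp only [unanimity_eq_ite, mul_ite, mul_one, mul_zero, ← sum_filter]
  congr 1
  ext T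
  simp only [mem_filter, mem_powerset, subset_inter_iff, and_comm]

theorem exists_sum_mul_unanimity_eq_fiberMean {n : ℕ} (f : Finset (Fin n) → ℝ)
    (S : Finset (Fin n)) :
    ∃ d : Finset (Fin n) → ℝ, ∀ X, ∑ T ∈ S.powerset, d T * unanimity T X = fiberMean f S X := by
  obtain ⟨d, hd⟩ := exists_sum_powerset_eq (fiberMean f S)
  refine ⟨d, fun X => ?_⟩
  rw [sum_mul_unanimity, hd, fiberMean, fiberMean, inter_assoc, inter_self]

theorem banzhafInfluence_eq_fiberMean_sub {n : ℕ} (f : Finset (Fin n) → ℝ) (S : Finset (Fin n)) :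
    banzhafInfluence f S = fiberMean f S S - fiberMean f S ∅ := by
  simp only [banzhafInfluence, fiberMean, Fintype.card_fin, inter_self, empty_inter, empty_union,
    ← mul_sub, ← sum_sub_distrib, union_comm S]

/-- if `f_S = Σ_{T⊆S} c(T) u_T` is the best least-squares approximation of
`f` among all multilinear polynomials depending only on the variables in `S`, then
`Φ_B(f,S) = f_S(S) − f_S(∅)`. -/
theorem banzhafInfluence_eq_fS_diff (n : ℕ) (f : Finset (Fin n) → ℝ)
    (S : Finset (Fin n)) (c : Finset (Fin n) → ℝ)
    (hmin : ∀ d : Finset (Fin n) → ℝ,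
        ∑ X : Finset (Fin n), (f X - ∑ T ∈ S.powerset, c T * unanimity T X) ^ 2
          ≤ ∑ X : Finset (Fin n), (f X - ∑ T ∈ S.powerset, d T * unanimity T X) ^ 2) :
    banzhafInfluence f S
      = (∑ T ∈ S.powerset, c T * unanimity T S)
        - (∑ T ∈ S.powerset, c T * unanimity T (∅ : Finset (Fin n))) := by
  obtain ⟨d, hd⟩ := exists_sum_mul_unanimity_eq_fiberMean f S
  have hproj : (fun X => ∑ T ∈ S.powerset, c T * unanimity T X) = fiberMean f S := by
    refine eq_of_sum_sq_sub_le_of_sum_mul_eq_zero ?_ (by simpa only [hd] using hmin d)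
    refine sum_sub_fiberMean_mul_eq_zero f S fun X => ?_
    simp only [sum_mul_unanimity, ← hd, inter_assoc, inter_self]
  rw [banzhafInfluence_eq_fiberMean_sub, ← hproj]
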